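/- Let F be a neardomain and G = T₂(F) the associated sharply 2-transitive group on F with base points 0 and 1. Then the set A associated to G (A = J∘ν or J ∪ {1} according to characteristic, where J is the set of involutions of G) equals { τ_{γ,1} : γ ∈ F }, the set of 'translations' x ↦ γ + x. Consequently, the neardomain structure reconstructed from (T₂(F), F, 0, 1) coincides with the original operations: α +₀ β = α + β and α ·₁ β = α · β for all α, β ∈ F. -/
import Mathlib


/-- A neardomain `(F, +, ·)`: `(F, +)` is a loop with neutral element `zero`
in which `a + b = 0 → b + a = 0`; `(F \ {0}, ·)` is a group with neutral
element `one`; `0·a = 0`; multiplication is left distributive over addition;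
and for all `a, b` there is `d_{a,b} ≠ 0` with
`a + (b + x) = (a + b) + d_{a,b}·x` for all `x`. -/
structure Neardomain (F : Type*) where
  add : F → F → F
  mul : F → F → F
  zero : F
  one : F
  zero_add : ∀ a, add zero a = a
  add_zero : ∀ a, add a zero = a
  addL : ∀ a b, ∃! x, add a x = b
  addR : ∀ a b, ∃! y, add y a = b
  neg_comm : ∀ a b, add a b = zero → add b a = zero
  one_ne_zero : one ≠ zero
  mul_ne_zero : ∀ a b, a ≠ zero → b ≠ zero → mul a b ≠ zero
  mul_assoc : ∀ a b c, a ≠ zero → b ≠ zero → c ≠ zero →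
    mul (mul a b) c = mul a (mul b c)
  one_mul : ∀ a, a ≠ zero → mul one a = a
  mul_one : ∀ a, a ≠ zero → mul a one = a
  inv_ex : ∀ a, a ≠ zero → ∃ b, b ≠ zero ∧ mul a b = one ∧ mul b a = one
  zero_mul : ∀ a, mul zero a = zero
  left_distrib : ∀ a b c, mul a (add b c) = add (mul a b) (mul a c)
  d_ex : ∀ a b, ∃ d, d ≠ zero ∧ ∀ x, add a (add b x) = add (add a b) (mul d x)

namespace Neardomain

variable {F : Type*} (D : Neardomain F)

lemma mul_zero' (a : F) : D.mul a D.zero = D.zero := by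
  have h := D.left_distrib a D.zero D.zero
  rw [D.zero_add] at h
  obtain ⟨x, hx, hu⟩ := D.addL (D.mul a D.zero) (D.mul a D.zero)
  have h1 := hu _ h.symm
  have h2 := hu _ (D.add_zero (D.mul a D.zero))
  rw [h1, ← h2]

lemma add_left_cancel {a x y : F} (h : D.add a x = D.add a y) : x = y := by
  obtain ⟨z, hz, hu⟩ := D.addL a (D.add a y)
  rw [hu _ h, hu _ rfl]

lemma add_right_cancel {a x y : F} (h : D.add x a = D.add y a) : x = y := by
  obtain ⟨z, hz, hu⟩ := D.addR a (D.add y a)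
  rw [hu _ h, hu _ rfl]

/-- the additive inverse -/
noncomputable def neg (a : F) : F := (D.addL a D.zero).exists.choose

lemma add_neg (a : F) : D.add a (D.neg a) = D.zero := (D.addL a D.zero).exists.choose_spec

lemma neg_add (a : F) : D.add (D.neg a) a = D.zero := D.neg_comm _ _ (D.add_neg a)

lemma neg_unique {a x : F} (h : D.add a x = D.zero) : x = D.neg a :=
  D.add_left_cancel (h.trans (D.add_neg a).symm)

lemma neg_zero : D.neg D.zero = D.zero := (D.neg_unique (D.zero_add D.zero)).symm

lemma neg_neg (a : F) : D.neg (D.neg a) = a := (D.neg_unique (D.neg_add a)).symm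

lemma one_mul' (a : F) : D.mul D.one a = a := by
  by_cases h : a = D.zero
  · rw [h, D.mul_zero']
  · exact D.one_mul a h

lemma mul_one' (a : F) : D.mul a D.one = a := by
  by_cases h : a = D.zero
  · rw [h, D.zero_mul]
  · exact D.mul_one a h

lemma mul_assoc' (a b c : F) : D.mul (D.mul a b) c = D.mul a (D.mul b c) := by
  by_cases ha : a = D.zero
  · rw [ha, D.zero_mul, D.zero_mul, D.zero_mul]
  by_cases hb : b = D.zero
  · rw [hb, D.mul_zero', D.zero_mul, D.mul_zero']

  by_cases hc : c = D.zero
  · rw [hc, D.mul_zero', D.mul_zero', D.mul_zero']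
  exact D.mul_assoc a b c ha hb hc

lemma mul_left_cancel {a x y : F} (ha : a ≠ D.zero) (h : D.mul a x = D.mul a y) : x = y := by
  by_cases hx : x = D.zero
  · subst hx
    rw [D.mul_zero'] at h
    by_contra hy0
    exact D.mul_ne_zero a y ha (fun hh => hy0 (hh ▸ rfl)) h.symm
  by_cases hy : y = D.zero
  · subst hy
    rw [D.mul_zero'] at h
    exact absurd h (D.mul_ne_zero a x ha hx)
  obtain ⟨b, hb0, hab, hba⟩ := D.inv_ex a ha
  have := congrArg (D.mul b) h
  rwa [← D.mul_assoc', ← D.mul_assoc', hba, D.one_mul', D.one_mul'] at this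

lemma mul_right_cancel {a x y : F} (ha : a ≠ D.zero) (h : D.mul x a = D.mul y a) : x = y := by
  by_cases hx : x = D.zero
  · subst hx
    rw [D.zero_mul] at h
    by_contra hy0
    exact D.mul_ne_zero y a (fun hh => hy0 (hh ▸ rfl)) ha h.symm
  by_cases hy : y = D.zero
  · subst hy
    rw [D.zero_mul] at h
    exact absurd h (D.mul_ne_zero x a hx ha)
  obtain ⟨b, hb0, hab, hba⟩ := D.inv_ex a ha
  have := congrArg (fun z => D.mul z b) h
  rwa [D.mul_assoc', D.mul_assoc', hab, D.mul_one', D.mul_one'] at this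

lemma add_neg_cancel_left (a : F) : ∀ x, D.add a (D.add (D.neg a) x) = x := by
  by_cases ha : a = D.zero
  · intro x; rw [ha, D.neg_zero, D.zero_add, D.zero_add]
  obtain ⟨d, hd0, hd⟩ := D.d_ex a (D.neg a)
  have hda : D.mul d a = a := by
    have := hd a
    rw [D.neg_add, D.add_zero, D.add_neg, D.zero_add] at this
    exact this.symm
  have hd1 : d = D.one := D.mul_right_cancel ha (hda.trans (D.one_mul' a).symm)
  intro x
  rw [hd x, D.add_neg, D.zero_add, hd1, D.one_mul']

lemma neg_add_cancel_left (a : F) : ∀ x, D.add (D.neg a) (D.add a x) = x := by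
  intro x
  have := D.add_neg_cancel_left (D.neg a) x
  rwa [D.neg_neg] at this

lemma add_cancel_of_neg {a b : F} (h : D.add a b = D.zero) :
    ∀ x, D.add a (D.add b x) = x := by
  intro x
  rw [D.neg_unique h, D.add_neg_cancel_left]

lemma neg_eq_mul_negone (a : F) : D.neg a = D.mul a (D.neg D.one) := by
  have h := D.left_distrib a D.one (D.neg D.one)
  rw [D.add_neg, D.mul_zero', D.mul_one'] at h
  exact (D.neg_unique h.symm).symm

lemma negone_ne_zero : D.neg D.one ≠ D.zero := by
  intro h
  have := D.add_neg D.one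
  rw [h, D.add_zero] at this
  exact D.one_ne_zero this

lemma negone_sq : D.mul (D.neg D.one) (D.neg D.one) = D.one := by
  have := D.neg_eq_mul_negone (D.neg D.one)
  rw [D.neg_neg] at this
  exact this.symm

/-- A nontrivial affine map with two fixed points is trivial. -/
lemma fp_unique {a b p q : F} (hb : b ≠ D.zero) (hpq : p ≠ q)
    (hp : D.add a (D.mul b p) = p) (hq : D.add a (D.mul b q) = q) :
    a = D.zero ∧ b = D.one := by
  obtain ⟨d, hd0, hd⟩ := D.d_ex a (D.mul b p)
  have key : ∀ x, D.add a (D.mul b (D.add p x)) = D.add p (D.mul d (D.mul b x)) := by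
    intro x
    rw [D.left_distrib, hd (D.mul b x), hp]
  set x₀ := D.add (D.neg p) q with hx₀
  have hpx₀ : D.add p x₀ = q := D.add_neg_cancel_left p q
  have hx₀0 : x₀ ≠ D.zero := by
    intro h
    rw [h, D.add_zero] at hpx₀
    exact hpq hpx₀
  have k0 := key x₀
  rw [hpx₀, hq] at k0
  -- q = p + d*(b*x₀),  also q = p + x₀
  have hdx : D.mul d (D.mul b x₀) = x₀ := D.add_left_cancel (k0.symm.trans hpx₀.symm)
  have hdb : D.mul d b = D.one := by
    apply D.mul_right_cancel hx₀0
    rw [D.mul_assoc', D.one_mul', hdx]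
  have hall : ∀ y, D.add a (D.mul b y) = y := by
    intro y
    have := key (D.add (D.neg p) y)
    rw [D.add_neg_cancel_left, ← D.mul_assoc', hdb, D.one_mul',
      D.add_neg_cancel_left] at this
    exact this
  have ha : a = D.zero := by
    have := hall D.zero
    rwa [D.mul_zero', D.add_zero] at this
  have hb1 : b = D.one := by
    have := hall D.one
    rwa [D.mul_one', ha, D.zero_add] at this
  exact ⟨ha, hb1⟩

lemma invol_data {a b : F} (hb : b ≠ D.zero)
    (h : ∀ x, D.add a (D.mul b (D.add a (D.mul b x))) = x) :
    D.add a (D.mul b a) = D.zero ∧ D.mul b b = D.one := by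
  have h0 := h D.zero
  rw [D.mul_zero', D.add_zero] at h0
  refine ⟨h0, ?_⟩
  have hba : D.mul b a = D.neg a := D.neg_unique h0
  have key : ∀ x, D.mul (D.mul b b) x = x := by
    intro x
    have hx := h x
    rw [D.left_distrib, ← D.mul_assoc', hba, D.add_neg_cancel_left] at hx
    exact hx
  have h1 := key D.one
  rwa [D.mul_one'] at h1

lemma conj_negone (γ : F) (hγ : γ ≠ D.zero) :
    ∃ m, D.mul m m = D.one ∧ D.mul m γ = D.mul γ (D.neg D.one) := by
  obtain ⟨iγ, hiγ0, hγiγ, hiγγ⟩ := D.inv_ex γ hγ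
  refine ⟨D.mul (D.mul γ (D.neg D.one)) iγ, ?_, ?_⟩
  · have h1 : D.mul iγ (D.mul (D.mul γ (D.neg D.one)) iγ)
        = D.mul (D.neg D.one) iγ := by
      rw [← D.mul_assoc', ← D.mul_assoc', hiγγ, D.one_mul']
    calc D.mul (D.mul (D.mul γ (D.neg D.one)) iγ) (D.mul (D.mul γ (D.neg D.one)) iγ)
        = D.mul (D.mul γ (D.neg D.one)) (D.mul iγ (D.mul (D.mul γ (D.neg D.one)) iγ)) :=
          D.mul_assoc' _ _ _
      _ = D.mul (D.mul γ (D.neg D.one)) (D.mul (D.neg D.one) iγ) := by rw [h1]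
      _ = D.one := by
          rw [D.mul_assoc', ← D.mul_assoc' (D.neg D.one), D.negone_sq, D.one_mul', hγiγ]
  · rw [D.mul_assoc', hiγγ, D.mul_one']

lemma fixw {b : F} (hb2 : D.mul b b = D.one) (hb1 : b ≠ D.one) :
    ∃ e iE, e ≠ D.zero ∧ D.add D.one e = b ∧ D.mul e iE = D.one ∧ D.mul iE e = D.one ∧
      D.add D.one (D.mul (D.neg D.one) (D.mul iE (D.neg D.one))) = D.mul iE (D.neg D.one) := by
  obtain ⟨e, he, _⟩ := D.addL D.one b
  have he0 : e ≠ D.zero := fun h => hb1 (by rw [h, D.add_zero] at he; exact he.symm)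
  obtain ⟨iE, hiE0, heiE, hiEe⟩ := D.inv_ex e he0
  obtain ⟨d, hd0, hd⟩ := D.d_ex (D.neg D.one) b
  set B := D.mul iE (D.mul d (D.mul b e)) with hB
  have hform : ∀ x, D.mul iE (D.add (D.neg D.one) (D.mul b (D.add D.one (D.mul e x))))
      = D.add D.one (D.mul B x) := by
    intro x
    rw [D.left_distrib b, D.mul_one', hd (D.mul b (D.mul e x))]
    have hne : D.add (D.neg D.one) b = e := by rw [← he, D.neg_add_cancel_left]
    rw [hne, D.left_distrib iE, hiEe]
    have hBx : D.mul B x = D.mul iE (D.mul d (D.mul b (D.mul e x))) := by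
      rw [hB, D.mul_assoc', D.mul_assoc', D.mul_assoc']
    rw [hBx]
  refine ⟨e, iE, he0, he, heiE, hiEe, ?_⟩
  have hw := hform (D.mul iE (D.neg D.one))
  rw [← D.mul_assoc' e, heiE, D.one_mul', D.add_neg, D.mul_zero', D.add_zero] at hw
  have h1 := hform D.one
  rw [D.mul_one' e, he, hb2, D.neg_add, D.mul_zero', D.mul_one' B] at h1
  have hBn : B = D.neg D.one := D.neg_unique h1.symm
  rw [hBn] at hw
  exact hw.symm

lemma sqrt_one_unique {b c : F} (hb2 : D.mul b b = D.one) (hb1 : b ≠ D.one)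
    (hc2 : D.mul c c = D.one) (hc1 : c ≠ D.one) : b = c := by
  obtain ⟨e, iE, he0, he, heiE, hiEe, hw⟩ := D.fixw hb2 hb1
  obtain ⟨e', iE', he0', he', heiE', hiEe', hw'⟩ := D.fixw hc2 hc1
  have hww : D.mul iE (D.neg D.one) = D.mul iE' (D.neg D.one) := by
    by_contra hne
    exact D.one_ne_zero (D.fp_unique D.negone_ne_zero hne hw hw').1
  have hiE : iE = iE' := D.mul_right_cancel D.negone_ne_zero hww
  have hee : e = e' := by
    have h1 : D.mul e' (D.mul iE e) = e' := by rw [hiEe, D.mul_one']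
    rw [hiE, ← D.mul_assoc', heiE', D.one_mul'] at h1
    exact h1
  rw [← he, ← he', hee]

lemma char_ne_two {c : F} (hc2 : D.mul c c = D.one) (hc1 : c ≠ D.one) :
    D.neg D.one ≠ D.one := by
  intro h
  obtain ⟨e, iE, he0, he, heiE, hiEe, hw⟩ := D.fixw hc2 hc1
  rw [h, D.one_mul'] at hw
  obtain ⟨y, hy, hu⟩ := D.addR (D.mul iE D.one) (D.mul iE D.one)
  have h1 := hu _ hw
  have h0 := hu _ (D.zero_add _)
  exact D.one_ne_zero (h1.trans h0.symm)

lemma neg_mul_eq {c : F} (hc2 : D.mul c c = D.one) (hc1 : c ≠ D.one) :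
    ∀ γ, D.mul c γ = D.neg γ := by
  intro γ
  by_cases hγ : γ = D.zero
  · rw [hγ, D.mul_zero', D.neg_zero]
  obtain ⟨m, hm2, hmγ⟩ := D.conj_negone γ hγ
  have hm1 : m ≠ D.one := by
    intro h
    rw [h, D.one_mul'] at hmγ
    have hn : D.neg D.one = D.one :=
      D.mul_left_cancel hγ (by rw [D.mul_one']; exact hmγ.symm)
    exact D.char_ne_two hc2 hc1 hn
  have hmc : m = c := D.sqrt_one_unique hm2 hm1 hc2 hc1
  rw [← hmc, hmγ, ← D.neg_eq_mul_negone]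

end Neardomain

/-- Let `F` be a neardomain and `G = T₂(F)` the associated
sharply 2-transitive group on `F` with base points `0` and `1`.  Then the set
`A` associated to `G` (`A = J∘ν` or `A = J ∪ {1}` according to the
characteristic) equals the set `{ τ_{γ,1} : x ↦ γ + x | γ ∈ F }` of
translations; consequently the neardomain operations reconstructed from
`(T₂(F), F, 0, 1)` coincide with the original ones:
`α +₀ β = α + β` and `α ·₁ β = α · β`. -/
theorem stmt18 {F : Type*} (D : Neardomain F)
    (T2 : Set (F → F))
    (hT2 : T2 = {f | ∃ a b, b ≠ D.zero ∧ f = fun x => D.add a (D.mul b x)})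
    (Trans : Set (F → F))
    (hTrans : Trans = {f | ∃ γ, f = fun x => D.add γ x}) :
    -- char ≠ 2 case: J∘ν = translations, for ν the involution of T₂(F) fixing 0
    (∀ ν ∈ T2, ν ∘ ν = id → ν ≠ id → ν D.zero = D.zero →
      {f | ∃ j ∈ T2, j ∘ j = id ∧ j ≠ id ∧ f = j ∘ ν} = Trans) ∧
    -- char = 2 case: J ∪ {1} = translations
    ((∀ j ∈ T2, j ∘ j = id → j ≠ id → ∀ x, j x ≠ x) →
      {f ∈ T2 | f ∘ f = id} = Trans) ∧
    -- reconstructed addition coincides: α +₀ β = a(β) for the unique a ∈ A =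
    -- Trans with a(0) = α, and this equals α + β
    (∀ f ∈ Trans, ∀ β : F, f β = D.add (f D.zero) β) ∧
    -- reconstructed multiplication coincides: for g in the stabilizer of 0 in
    -- T₂(F) with g(1) = α one has α ·₁ β = g(β) = α · β
    (∀ g ∈ T2, g D.zero = D.zero → ∀ β : F, D.mul (g D.one) β = g β) := by
  refine ⟨?_, ?_, ?_, ?_⟩
  · -- Part 1 : char ≠ 2
    intro ν hν hνν hνid hν0
    rw [hT2] at hν
    obtain ⟨a₀, c, hcz, rfl⟩ := hν
    have ha₀ : a₀ = D.zero := by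
      have h := hν0
      simp only at h
      rwa [D.mul_zero', D.add_zero] at h
    subst ha₀
    have hc2 : D.mul c c = D.one := by
      have h1 := congrFun hνν D.one
      simp only [Function.comp_apply, id_eq] at h1
      rwa [D.zero_add, D.mul_one', D.zero_add] at h1
    have hc1 : c ≠ D.one := by
      intro h
      apply hνid
      funext x
      simp only [id_eq]
      rw [h, D.one_mul', D.zero_add]
    have hnm := D.neg_mul_eq hc2 hc1
    ext f
    simp only [Set.mem_setOf_eq, hTrans]
    constructor
    · rintro ⟨j, hjT2, hjj, hjid, rfl⟩
      rw [hT2] at hjT2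
      obtain ⟨a, b, hb0, rfl⟩ := hjT2
      have hjj' : ∀ x, D.add a (D.mul b (D.add a (D.mul b x))) = x := by
        intro x
        have h := congrFun hjj x
        simpa only [Function.comp_apply, id_eq] using h
      obtain ⟨hba, hb2⟩ := D.invol_data hb0 hjj'
      have hb1 : b ≠ D.one := by
        intro h
        subst h
        rw [D.one_mul'] at hba
        by_cases ha : a = D.zero
        · apply hjid
          funext x
          simp only [id_eq]
          rw [ha, D.one_mul', D.zero_add]
        · have haa : a = D.neg a := D.neg_unique hba
          have : D.neg D.one = D.one := by
            apply D.mul_left_cancel ha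
            rw [D.mul_one', ← D.neg_eq_mul_negone, ← haa]
          exact D.char_ne_two hc2 hc1 this
      have hbc : b = c := D.sqrt_one_unique hb2 hb1 hc2 hc1
      refine ⟨a, ?_⟩
      funext x
      show D.add a (D.mul b (D.add D.zero (D.mul c x))) = D.add a x
      rw [D.zero_add, ← D.mul_assoc', hbc, hc2, D.one_mul']
    · rintro ⟨γ, rfl⟩
      refine ⟨fun x => D.add γ (D.mul c x), ?_, ?_, ?_, ?_⟩
      · rw [hT2]
        exact ⟨γ, c, hcz, rfl⟩
      · funext x
        show D.add γ (D.mul c (D.add γ (D.mul c x))) = x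
        rw [D.left_distrib, hnm γ, ← D.mul_assoc', hc2, D.one_mul']
        exact D.add_neg_cancel_left γ x
      · intro h
        have h0 := congrFun h D.zero
        have h1 := congrFun h D.one
        simp only [id_eq] at h0 h1
        rw [D.mul_zero', D.add_zero] at h0
        rw [D.mul_one', h0, D.zero_add] at h1
        exact hc1 h1
      · funext x
        show D.add γ x = D.add γ (D.mul c (D.add D.zero (D.mul c x)))
        rw [D.zero_add, ← D.mul_assoc', hc2, D.one_mul']
  · -- Part 2 : char = 2
    intro hfpf
    have hnosq : ∀ b : F, D.mul b b = D.one → b = D.one := by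
      intro b hb2
      by_contra hb1
      have hb0 : b ≠ D.zero := by
        intro h
        rw [h, D.zero_mul] at hb2
        exact D.one_ne_zero hb2.symm
      have hkey := hfpf (fun x => D.add D.zero (D.mul b x))
        (by rw [hT2]; exact ⟨D.zero, b, hb0, rfl⟩)
        (by
          funext x
          show D.add D.zero (D.mul b (D.add D.zero (D.mul b x))) = x
          rw [D.zero_add, D.zero_add, ← D.mul_assoc', hb2, D.one_mul'])
        (by
          intro h
          apply hb1
          have h1 := congrFun h D.one
          simp only [id_eq] at h1
          rwa [D.zero_add, D.mul_one'] at h1)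
        D.zero
      apply hkey
      show D.add D.zero (D.mul b D.zero) = D.zero
      rw [D.mul_zero', D.zero_add]
    have hchar2 : ∀ γ : F, γ = D.neg γ := by
      intro γ
      by_cases hγ : γ = D.zero
      · rw [hγ, D.neg_zero]
      obtain ⟨m, hm2, hmγ⟩ := D.conj_negone γ hγ
      rw [hnosq m hm2, D.one_mul'] at hmγ
      rw [D.neg_eq_mul_negone]
      exact hmγ
    ext f
    simp only [Set.mem_setOf_eq, hTrans]
    constructor
    · rintro ⟨hfT2, hff⟩
      rw [hT2] at hfT2
      obtain ⟨a, b, hb0, rfl⟩ := hfT2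
      have hff' : ∀ x, D.add a (D.mul b (D.add a (D.mul b x))) = x := by
        intro x
        have h := congrFun hff x
        simpa only [Function.comp_apply, id_eq] using h
      obtain ⟨hba, hb2⟩ := D.invol_data hb0 hff'
      refine ⟨a, ?_⟩
      funext x
      show D.add a (D.mul b x) = D.add a x
      rw [hnosq b hb2, D.one_mul']
    · rintro ⟨γ, rfl⟩
      constructor
      · rw [hT2]
        refine ⟨γ, D.one, D.one_ne_zero, ?_⟩
        funext x
        show D.add γ x = D.add γ (D.mul D.one x)
        rw [D.one_mul']
      · funext x
        show D.add γ (D.add γ x) = x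
        have hγγ : D.add γ γ = D.zero := by
          have h := D.add_neg γ
          rwa [← hchar2 γ] at h
        exact D.add_cancel_of_neg hγγ x
  · -- Part 3 : addition
    intro f hf β
    rw [hTrans] at hf
    obtain ⟨γ, rfl⟩ := hf
    show D.add γ β = D.add (D.add γ D.zero) β
    rw [D.add_zero]
  · -- Part 4 : multiplication
    intro g hg hg0 β
    rw [hT2] at hg
    obtain ⟨a, b, hb0, rfl⟩ := hg
    simp only at hg0 ⊢
    rw [D.mul_zero', D.add_zero] at hg0
    rw [hg0, D.zero_add, D.zero_add, D.mul_one']
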